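/- arXiv:1102.5760 — 3 statements merged into one kernel-verified Lean document; each statement's English description precedes it below -/
import Mathlib

section
/- Let N = ℤ^n with dual lattice M = ℤ^n, and let σ ⊆ N ⊗ ℚ be a rational polyhedral cone, i.e. the set of non-negative rational combinations of a finite subset of N. Let σ^∨ ⊆ M ⊗ ℚ denote the dual cone, let u ∈ σ^∨ ∩ M, and set τ = σ ∩ u^⊥ = { x ∈ σ : ⟨u, x⟩ = 0 }. Then τ^∨ ∩ M = { w − k·u : w ∈ σ^∨ ∩ M, k ∈ ℕ }; in other words, the monoid τ^∨ ∩ M is obtained from the monoid σ^∨ ∩ M by adjoining −u. -/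
/-- The standard pairing `⟨u, x⟩ = ∑ i, u i * x i` on `ℚⁿ`. -/
def dotQ {n : ℕ} (u x : Fin n → ℚ) : ℚ := ∑ i, u i * x i

/-- A point of `ℚⁿ` is a lattice point if all its coordinates are integers. -/
def IsLatticePoint {n : ℕ} (x : Fin n → ℚ) : Prop := ∀ i, ∃ m : ℤ, x i = m

/-- The dual cone of a subset `σ ⊆ ℚⁿ`. -/
def dualConeQ {n : ℕ} (σ : Set (Fin n → ℚ)) : Set (Fin n → ℚ) :=
  { u | ∀ x ∈ σ, 0 ≤ dotQ u x }

lemma dotQ_add_left {n : ℕ} (a b x : Fin n → ℚ) :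
    dotQ (a + b) x = dotQ a x + dotQ b x := by
  simp [dotQ, add_mul, Finset.sum_add_distrib]

lemma dotQ_smul_left {n : ℕ} (c : ℚ) (a x : Fin n → ℚ) :
    dotQ (c • a) x = c * dotQ a x := by
  simp [dotQ, Finset.mul_sum, mul_assoc]

lemma dotQ_smul_right {n : ℕ} (c : ℚ) (a x : Fin n → ℚ) :
    dotQ a (c • x) = c * dotQ a x := by
  simp [dotQ, Finset.mul_sum, mul_left_comm, mul_comm, mul_assoc]

lemma dotQ_sum_right {n : ℕ} (a : Fin n → ℚ) (s : Finset (Fin n → ℚ))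
    (f : (Fin n → ℚ) → (Fin n → ℚ)) :
    dotQ a (∑ v ∈ s, f v) = ∑ v ∈ s, dotQ a (f v) := by
  simp [dotQ, Finset.mul_sum]
  rw [Finset.sum_comm]

/-- monoid-level statement underlying Section 3.3 of the paper.
Let `σ ⊆ ℚⁿ` be a rational polyhedral cone (non-negative rational combinations of a
finite set of lattice points), `u ∈ σ^∨ ∩ M` a lattice point of the dual cone, and
`τ = σ ∩ u^⊥`.  Then `τ^∨ ∩ M = { w − k·u : w ∈ σ^∨ ∩ M, k ∈ ℕ }`: the monoid
`τ^∨ ∩ M` is obtained from `σ^∨ ∩ M` by adjoining `−u`. -/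
theorem dual_face_monoid_eq_adjoin_neg
    {n : ℕ} (σ : Set (Fin n → ℚ))
    (hσ : ∃ s : Finset (Fin n → ℚ), (∀ v ∈ s, IsLatticePoint v) ∧
      σ = { x | ∃ c : (Fin n → ℚ) → ℚ, (∀ v, 0 ≤ c v) ∧ x = ∑ v ∈ s, c v • v })
    (u : Fin n → ℚ) (hu : u ∈ dualConeQ σ) (huL : IsLatticePoint u) :
    { w | w ∈ dualConeQ {x ∈ σ | dotQ u x = 0} ∧ IsLatticePoint w }
      = { z | ∃ w ∈ dualConeQ σ, IsLatticePoint w ∧ ∃ k : ℕ, z = w - (k : ℚ) • u } := by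
  obtain ⟨s, hsL, hσeq⟩ := hσ
  classical
  -- every generator lies in σ
  have hgen : ∀ v ∈ s, v ∈ σ := by
    intro v hv
    rw [hσeq]
    refine ⟨fun v' => if v' = v then 1 else 0, fun v' => by positivity, ?_⟩
    have : ∀ v' ∈ s, (if v' = v then (1:ℚ) else 0) • v' = if v' = v then v' else 0 := by
      intro v' _; split <;> simp
    rw [Finset.sum_congr rfl this, Finset.sum_ite_eq' s v (fun x => x), if_pos hv]
  ext z
  simp only [Set.mem_setOf_eq]
  constructor
  · rintro ⟨hz, hzL⟩
    -- choose k large enough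
    set K : ℕ := s.sup (fun v => ⌈(-(dotQ z v)) / (dotQ u v)⌉₊) with hK
    have hKv : ∀ v ∈ s, 0 ≤ dotQ z v + (K : ℚ) * dotQ u v := by
      intro v hv
      have huv : 0 ≤ dotQ u v := hu v (hgen v hv)
      rcases lt_or_eq_of_le huv with hpos | hzero
      · have h1 : (-(dotQ z v)) / (dotQ u v) ≤ (K : ℚ) := by
          calc (-(dotQ z v)) / (dotQ u v) ≤ (⌈(-(dotQ z v)) / (dotQ u v)⌉₊ : ℚ) :=
                Nat.le_ceil _
            _ ≤ (K : ℚ) := Nat.cast_le.mpr (Finset.le_sup (f := fun v => ⌈-dotQ z v / dotQ u v⌉₊) hv)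
        have := (div_le_iff₀ hpos).mp h1
        linarith
      · have hvτ : v ∈ {x ∈ σ | dotQ u x = 0} := ⟨hgen v hv, hzero.symm⟩
        have := hz v hvτ
        rw [← hzero]
        linarith
    refine ⟨z + (K : ℚ) • u, ?_, ?_, K, by abel⟩
    · intro x hx
      rw [hσeq] at hx
      obtain ⟨c, hc, rfl⟩ := hx
      rw [dotQ_sum_right]
      apply Finset.sum_nonneg
      intro v hv
      rw [dotQ_smul_right]
      have : 0 ≤ dotQ (z + (K : ℚ) • u) v := by
        rw [dotQ_add_left, dotQ_smul_left]; exact hKv v hv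
      exact mul_nonneg (hc v) this
    · intro i
      obtain ⟨m, hm⟩ := hzL i
      obtain ⟨m', hm'⟩ := huL i
      exact ⟨m + K * m', by simp [Pi.add_apply, hm, hm']⟩
  · rintro ⟨w, hw, hwL, k, rfl⟩
    constructor
    · intro x hx
      obtain ⟨hxσ, hxu⟩ := hx
      have h1 : dotQ (w - (k : ℚ) • u) x = dotQ w x - (k : ℚ) * dotQ u x := by
        have := dotQ_add_left (w - (k : ℚ) • u) ((k : ℚ) • u) x
        rw [sub_add_cancel, dotQ_smul_left] at this
        linarith
      rw [h1, hxu]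
      have := hw x hxσ
      linarith
    · intro i
      obtain ⟨m, hm⟩ := hwL i
      obtain ⟨m', hm'⟩ := huL i
      exact ⟨m - k * m', by simp [Pi.sub_apply, hm, hm']⟩
end

section
/- Let N = ℤ^n with dual lattice M = ℤ^n, let σ ⊆ N ⊗ ℚ be a rational polyhedral cone, let u ∈ σ^∨ ∩ M, and set τ = σ ∩ u^⊥. Consider the monoid algebras A = ℂ[σ^∨ ∩ M] and B = ℂ[τ^∨ ∩ M] (the ℂ-algebras with ℂ-basis the monomials χ^w for w in the respective monoids, with χ^w · χ^{w'} = χ^{w+w'}). Then the ℂ-algebra homomorphism A → B induced by the inclusion of monoids σ^∨ ∩ M ⊆ τ^∨ ∩ M exhibits B as the localization of A away from the element χ^u, i.e. B ≅ A[(χ^u)^{-1}]. -/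
/-- The pairing between the lattice `M = ℤⁿ` and `ℚⁿ`. -/
def dotZQ {n : ℕ} (u : Fin n → ℤ) (x : Fin n → ℚ) : ℚ := ∑ i, (u i : ℚ) * x i

/-- The monoid `σ^∨ ∩ M` of lattice points of the dual cone of `σ ⊆ ℚⁿ`,
as an additive submonoid of `M = ℤⁿ`. -/
def dualLatticeMonoid {n : ℕ} (σ : Set (Fin n → ℚ)) : AddSubmonoid (Fin n → ℤ) where
  carrier := { u | ∀ x ∈ σ, 0 ≤ dotZQ u x }
  zero_mem' := by
    intro x hx
    simp [dotZQ]
  add_mem' := by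
    intro a b ha hb x hx
    have h : dotZQ (a + b) x = dotZQ a x + dotZQ b x := by
      simp [dotZQ, add_mul, Finset.sum_add_distrib]
    rw [h]
    exact add_nonneg (ha x hx) (hb x hx)

lemma dualLatticeMonoid_mono {n : ℕ} {σ τ : Set (Fin n → ℚ)} (h : τ ⊆ σ) :
    dualLatticeMonoid σ ≤ dualLatticeMonoid τ :=
  fun _ hw x hx => hw x (h hx)

lemma dotZQ_add_left {n : ℕ} (a b : Fin n → ℤ) (x : Fin n → ℚ) :
    dotZQ (a + b) x = dotZQ a x + dotZQ b x := by
  simp [dotZQ, add_mul, Finset.sum_add_distrib]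

lemma dotZQ_nsmul_left {n : ℕ} (k : ℕ) (a : Fin n → ℤ) (x : Fin n → ℚ) :
    dotZQ (k • a) x = k * dotZQ a x := by
  simp only [dotZQ, Finset.mul_sum]
  refine Finset.sum_congr rfl fun i _ => ?_
  have h : (((k • a) i : ℤ) : ℚ) = (k : ℚ) * (a i : ℚ) := by
    simp [Pi.smul_apply]
  rw [h]; ring

lemma dotZQ_neg_left {n : ℕ} (a : Fin n → ℤ) (x : Fin n → ℚ) :
    dotZQ (-a) x = -dotZQ a x := by
  simp [dotZQ, Finset.sum_neg_distrib]

lemma dotZQ_sum_right {n : ℕ} (u : Fin n → ℤ) (s : Finset (Fin n → ℚ)) (c : (Fin n → ℚ) → ℚ) :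
    dotZQ u (∑ v ∈ s, c v • v) = ∑ v ∈ s, c v * dotZQ u v := by
  simp only [dotZQ, Finset.sum_apply, Pi.smul_apply, smul_eq_mul, Finset.mul_sum]
  rw [Finset.sum_comm]
  refine Finset.sum_congr rfl fun v _ => ?_
  refine Finset.sum_congr rfl fun i _ => ?_
  ring

lemma dotZQ_int {n : ℕ} (u : Fin n → ℤ) {v : Fin n → ℚ} (hv : IsLatticePoint v) :
    ∃ m : ℤ, dotZQ u v = m := by
  choose m hm using hv
  exact ⟨∑ i, u i * m i, by push_cast [dotZQ, hm]; rfl⟩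

lemma exists_shift {n : ℕ} {σ : Set (Fin n → ℚ)}
    (hσ : ∃ s : Finset (Fin n → ℚ), (∀ v ∈ s, IsLatticePoint v) ∧
      σ = { x | ∃ c : (Fin n → ℚ) → ℚ, (∀ v, 0 ≤ c v) ∧ x = ∑ v ∈ s, c v • v })
    {u : Fin n → ℤ} (hu : u ∈ dualLatticeMonoid σ)
    {w : Fin n → ℤ} (hw : w ∈ dualLatticeMonoid {x ∈ σ | dotZQ u x = 0}) :
    ∃ k : ℕ, w + k • u ∈ dualLatticeMonoid σ := by
  obtain ⟨s, hlat, hσeq⟩ := hσ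
  -- every generator lies in σ
  have hvσ : ∀ v ∈ s, v ∈ σ := by
    intro v hv
    rw [hσeq]
    refine ⟨fun v' => if v' = v then 1 else 0, fun v' => by positivity, ?_⟩
    rw [Finset.sum_congr rfl (fun v' _ => show (if v' = v then (1:ℚ) else 0) • v'
      = if v' = v then v' else 0 by split <;> simp_all)]
    simp [Finset.sum_ite_eq', hv]
  obtain ⟨k, hk⟩ := exists_nat_ge (∑ v ∈ s, max 0 (-dotZQ w v))
  refine ⟨k, ?_⟩
  intro x hx
  rw [hσeq] at hx
  obtain ⟨c, hc, rfl⟩ := hx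
  rw [dotZQ_add_left, dotZQ_nsmul_left, dotZQ_sum_right, dotZQ_sum_right, Finset.mul_sum,
    ← Finset.sum_add_distrib]
  refine Finset.sum_nonneg fun v hv => ?_
  rw [mul_left_comm, ← mul_add]
  refine mul_nonneg (hc v) ?_
  have huv : 0 ≤ dotZQ u v := hu v (hvσ v hv)
  rcases eq_or_lt_of_le huv with heq | hlt
  · -- v ∈ τ
    have hvτ : v ∈ {x ∈ σ | dotZQ u x = 0} := ⟨hvσ v hv, heq.symm⟩
    have := hw v hvτ
    rw [← heq]
    linarith
  · -- dotZQ u v ≥ 1 since it is a positive integer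
    obtain ⟨m, hm⟩ := dotZQ_int u (hlat v hv)
    have hm1 : (1 : ℚ) ≤ dotZQ u v := by
      rw [hm] at hlt ⊢
      exact_mod_cast (by exact_mod_cast hlt : (0:ℤ) < m)
    have hterm : max 0 (-dotZQ w v) ≤ ∑ v' ∈ s, max 0 (-dotZQ w v') :=
      Finset.single_le_sum (f := fun v' => max 0 (-dotZQ w v')) (fun v' _ => le_max_left _ _) hv
    have h1 : -dotZQ w v ≤ (k : ℚ) := le_trans (le_trans (le_max_right _ _) hterm) hk
    nlinarith [le_max_left (0:ℚ) (-dotZQ w v)]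

/-- algebraic claim of Section 3.3 of the paper.
Let `σ ⊆ ℚⁿ` be a rational polyhedral cone, `u ∈ σ^∨ ∩ M`, and `τ = σ ∩ u^⊥`.
Then the `ℂ`-algebra homomorphism `ℂ[σ^∨ ∩ M] → ℂ[τ^∨ ∩ M]` induced by the inclusion
of monoids exhibits `ℂ[τ^∨ ∩ M]` as the localization of `ℂ[σ^∨ ∩ M]` away from `χ^u`. -/
theorem monoidAlgebra_face_isLocalization_away
    {n : ℕ} (σ : Set (Fin n → ℚ))
    (hσ : ∃ s : Finset (Fin n → ℚ), (∀ v ∈ s, IsLatticePoint v) ∧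
      σ = { x | ∃ c : (Fin n → ℚ) → ℚ, (∀ v, 0 ≤ c v) ∧ x = ∑ v ∈ s, c v • v })
    (u : Fin n → ℤ) (hu : u ∈ dualLatticeMonoid σ) :
    letI A := AddMonoidAlgebra ℂ (dualLatticeMonoid σ)
    letI B := AddMonoidAlgebra ℂ (dualLatticeMonoid {x ∈ σ | dotZQ u x = 0})
    letI : Algebra A B := (AddMonoidAlgebra.mapDomainRingHom ℂ
      (AddSubmonoid.inclusion
        (dualLatticeMonoid_mono (fun x hx => hx.1)))).toAlgebra
    IsLocalization.Away
      (AddMonoidAlgebra.single (⟨u, hu⟩ : dualLatticeMonoid σ) (1 : ℂ) : A) B := by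
  set τ : Set (Fin n → ℚ) := {x ∈ σ | dotZQ u x = 0} with hτ
  set Mσ := dualLatticeMonoid σ
  set Mτ := dualLatticeMonoid τ
  have hsub : Mσ ≤ Mτ := dualLatticeMonoid_mono (fun x hx => hx.1)
  set ι : Mσ →+ Mτ := AddSubmonoid.inclusion hsub with hι
  set f : AddMonoidAlgebra ℂ Mσ →+* AddMonoidAlgebra ℂ Mτ :=
    AddMonoidAlgebra.mapDomainRingHom ℂ ι with hf
  letI : Algebra (AddMonoidAlgebra ℂ Mσ) (AddMonoidAlgebra ℂ Mτ) := f.toAlgebra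
  have halg : algebraMap (AddMonoidAlgebra ℂ Mσ) (AddMonoidAlgebra ℂ Mτ) = f :=
    RingHom.algebraMap_toAlgebra f
  set t : AddMonoidAlgebra ℂ Mσ := AddMonoidAlgebra.single (⟨u, hu⟩ : Mσ) (1 : ℂ) with ht
  have huτ : u ∈ Mτ := hsub hu
  have hnegu : -u ∈ Mτ := by
    intro x hx
    rw [dotZQ_neg_left, hx.2]
    simp
  have hfsingle : ∀ (g : Mσ) (c : ℂ),
      f (AddMonoidAlgebra.single g c) = AddMonoidAlgebra.single (ι g) c := by
    intro g c
    exact AddMonoidAlgebra.mapDomain_single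
  have hft : f t = AddMonoidAlgebra.single (⟨u, huτ⟩ : Mτ) 1 := by
    rw [ht, hfsingle]
    rfl
  have hunit : IsUnit (f t) := by
    rw [hft]
    refine IsUnit.of_mul_eq_one (AddMonoidAlgebra.single (⟨-u, hnegu⟩ : Mτ) 1) ?_
    rw [AddMonoidAlgebra.single_mul_single, one_mul]
    have : (⟨u, huτ⟩ : Mτ) + ⟨-u, hnegu⟩ = 0 := by
      ext i
      simp
    rw [this]
    rfl
  have hinj : Function.Injective f := by
    refine AddMonoidAlgebra.mapDomain_injective ?_
    intro a b hab
    have h2 := congrArg Subtype.val hab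
    exact Subtype.ext h2
  refine ⟨⟨?_, ?_, ?_⟩⟩
  · -- map_units
    rintro ⟨y, k, rfl⟩
    rw [halg]
    simp only [map_pow]
    exact hunit.pow k
  · -- surj
    intro z
    suffices h : ∃ (a : AddMonoidAlgebra ℂ Mσ) (k : ℕ), z * (f t) ^ k = f a by
      obtain ⟨a, k, hk⟩ := h
      refine ⟨⟨a, ⟨t ^ k, pow_mem (Submonoid.mem_powers t) k⟩⟩, ?_⟩
      rw [halg]
      simpa [map_pow] using hk
    induction z using AddMonoidAlgebra.induction_linear with
    | zero => exact ⟨0, 0, by simp⟩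
    | add p q hp hq =>
      obtain ⟨a1, k1, h1⟩ := hp
      obtain ⟨a2, k2, h2⟩ := hq
      refine ⟨a1 * t ^ k2 + a2 * t ^ k1, k1 + k2, ?_⟩
      rw [map_add, map_mul, map_mul, map_pow, map_pow, ← h1, ← h2]
      ring
    | single g c =>
      obtain ⟨k, hk⟩ := exists_shift hσ hu g.2
      refine ⟨AddMonoidAlgebra.single (⟨g.1 + k • u, hk⟩ : Mσ) c, k, ?_⟩
      rw [hft, AddMonoidAlgebra.single_pow, hfsingle, AddMonoidAlgebra.single_mul_single,
        one_pow, mul_one]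
      congr 1
  · -- exists_of_eq
    intro x y hxy
    rw [halg] at hxy
    exact ⟨1, by rw [hinj hxy]⟩
end

section
/- Let N' = ℤⁿ with dual lattice M' = ℤⁿ, let δ ⊆ ℚⁿ be a rational polyhedral cone, and let Δ₀, Δ₁, …, Δ_l ⊆ ℚⁿ be nonempty rational convex polyhedra, each with recession cone δ, forming an admissible Minkowski decomposition of Δ := Δ₀ + ⋯ + Δ_l, i.e.: for every u ∈ δ^∨, at most one of the faces face(Δᵢ, u) := { x ∈ Δᵢ : ⟨u, x⟩ = min_{y ∈ Δᵢ} ⟨u, y⟩ } contains no point of ℤⁿ. Let σ̃ ⊆ ℚⁿ × ℚ^{l+1} be the cone generated by δ × {0} together with Δᵢ × {eᵢ} for 0 ≤ i ≤ l (eᵢ the standard basis of ℚ^{l+1}), and let R = ℂ[σ̃^∨ ∩ (ℤⁿ ⊕ ℤ^{l+1})] be the associated monoid algebra. Set tᵢ = χ^{(0, eᵢ)} − χ^{(0, e₀)} ∈ R for 1 ≤ i ≤ l. Then: (1) R is flat as a module over the polynomial ring ℂ[x₁, …, x_l] via the ℂ-algebra map sending xᵢ to tᵢ; and (2) the quotient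 R/(t₁, …, t_l) is isomorphic as a ℂ-algebra to ℂ[σ^∨ ∩ (ℤⁿ ⊕ ℤ)], where σ ⊆ ℚⁿ × ℚ is the cone generated by δ × {0} and Δ × {1}. -/
open Pointwise

/-- The cone generated by a subset `S` of a `ℚ`-vector space: all finite
non-negative rational combinations of elements of `S`. -/
def coneGen {V : Type*} [AddCommMonoid V] [Module ℚ V] (S : Set V) : Set V :=
  { z | ∃ (k : ℕ) (c : Fin k → ℚ) (g : Fin k → V),
      (∀ j, 0 ≤ c j) ∧ (∀ j, g j ∈ S) ∧ z = ∑ j, c j • g j }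

/-- The pairing between the lattice `ℤⁿ × ℤᵐ` and `ℚⁿ × ℚᵐ`. -/
def pairQ {n m : ℕ} (w : (Fin n → ℤ) × (Fin m → ℤ))
    (z : (Fin n → ℚ) × (Fin m → ℚ)) : ℚ :=
  dotZQ w.1 z.1 + dotZQ w.2 z.2

lemma pairQ_add {n m : ℕ} (a b : (Fin n → ℤ) × (Fin m → ℤ))
    (z : (Fin n → ℚ) × (Fin m → ℚ)) :
    pairQ (a + b) z = pairQ a z + pairQ b z := by
  simp only [pairQ, dotZQ, Prod.fst_add, Prod.snd_add, Pi.add_apply, Int.cast_add,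
    add_mul, Finset.sum_add_distrib]
  ring

/-- The monoid of lattice points of the dual cone of `σ ⊆ ℚⁿ × ℚᵐ`, as an additive
submonoid of the lattice `ℤⁿ × ℤᵐ`. -/
def dualMonoid {n m : ℕ} (σ : Set ((Fin n → ℚ) × (Fin m → ℚ))) :
    AddSubmonoid ((Fin n → ℤ) × (Fin m → ℤ)) where
  carrier := { w | ∀ z ∈ σ, 0 ≤ pairQ w z }
  zero_mem' := by
    intro z hz
    simp [pairQ, dotZQ]
  add_mem' := by
    intro a b ha hb z hz
    rw [pairQ_add]
    exact add_nonneg (ha z hz) (hb z hz)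

/-- A rational polyhedral cone in `ℚⁿ`: the set of non-negative rational
combinations of a finite set of lattice points. -/
def IsRatPolyhedralCone {n : ℕ} (δ : Set (Fin n → ℚ)) : Prop :=
  ∃ s : Finset (Fin n → ℚ), (∀ v ∈ s, IsLatticePoint v) ∧ δ = coneGen (s : Set (Fin n → ℚ))

/-- A nonempty rational convex polyhedron in `ℚⁿ`: a nonempty intersection of
finitely many closed affine half-spaces (with rational data). -/
def IsRatPolyhedron {n : ℕ} (Δ : Set (Fin n → ℚ)) : Prop :=
  Δ.Nonempty ∧ ∃ (k : ℕ) (f : Fin k → (Fin n → ℚ)) (c : Fin k → ℚ),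
    Δ = { x | ∀ j, ∑ i, f j i * x i ≤ c j }

/-- The recession cone of a subset of `ℚⁿ`. -/
def recessionCone {n : ℕ} (Δ : Set (Fin n → ℚ)) : Set (Fin n → ℚ) :=
  { a | ∀ x ∈ Δ, a + x ∈ Δ }

/-- The face of `Δ` in direction `u`: the points of `Δ` where `⟨u, ·⟩` attains its
minimum over `Δ`. -/
def faceOf {n : ℕ} (Δ : Set (Fin n → ℚ)) (u : Fin n → ℚ) : Set (Fin n → ℚ) :=
  { x ∈ Δ | ∀ y ∈ Δ, ∑ i, u i * x i ≤ ∑ i, u i * y i }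

/-- The Cayley cone `σ̃ ⊆ ℚⁿ × ℚ^{l+1}` generated by `δ × {0}` and the
`Δ i × {e i}`. -/
def sigmaTilde {n l : ℕ} (δ : Set (Fin n → ℚ)) (Δ : Fin (l + 1) → Set (Fin n → ℚ)) :
    Set ((Fin n → ℚ) × (Fin (l + 1) → ℚ)) :=
  coneGen ((δ ×ˢ ({0} : Set (Fin (l + 1) → ℚ))) ∪
    ⋃ i, (Δ i) ×ˢ ({Pi.single i 1} : Set (Fin (l + 1) → ℚ)))

/-- The Cayley cone `σ ⊆ ℚⁿ × ℚ` generated by `δ × {0}` and `Δ × {1}` (with the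
second factor `ℚ` realized as `Fin 1 → ℚ`). -/
def sigmaCayley {n : ℕ} (δ ΔT : Set (Fin n → ℚ)) :
    Set ((Fin n → ℚ) × (Fin 1 → ℚ)) :=
  coneGen ((δ ×ˢ ({0} : Set (Fin 1 → ℚ))) ∪ ΔT ×ˢ ({fun _ => 1} : Set (Fin 1 → ℚ)))

section Base

lemma dotZQ_addRight {n : ℕ} (u : Fin n → ℤ) (x y : Fin n → ℚ) :
    dotZQ u (x + y) = dotZQ u x + dotZQ u y := by
  simp [dotZQ, mul_add, Finset.sum_add_distrib]

lemma dotZQ_smulRight {n : ℕ} (u : Fin n → ℤ) (c : ℚ) (x : Fin n → ℚ) :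
    dotZQ u (c • x) = c * dotZQ u x := by
  simp [dotZQ, Finset.mul_sum]; ring_nf; simp [mul_comm, mul_left_comm]

lemma pairQ_addRight {n m : ℕ} (w : (Fin n → ℤ) × (Fin m → ℤ))
    (z z' : (Fin n → ℚ) × (Fin m → ℚ)) :
    pairQ w (z + z') = pairQ w z + pairQ w z' := by
  simp [pairQ, dotZQ_addRight]; ring

lemma pairQ_smulRight {n m : ℕ} (w : (Fin n → ℤ) × (Fin m → ℤ)) (c : ℚ)
    (z : (Fin n → ℚ) × (Fin m → ℚ)) :
    pairQ w (c • z) = c * pairQ w z := by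
  simp [pairQ, Prod.smul_fst, Prod.smul_snd, dotZQ_smulRight, mul_add]

lemma mem_dualMonoid_coneGen {n m : ℕ} {G : Set ((Fin n → ℚ) × (Fin m → ℚ))}
    {w : (Fin n → ℤ) × (Fin m → ℤ)} :
    w ∈ dualMonoid (coneGen G) ↔ ∀ z ∈ G, 0 ≤ pairQ w z := by
  constructor
  · intro h z hz
    exact h z ⟨1, fun _ => 1, fun _ => z, fun _ => zero_le_one, fun _ => hz, by simp⟩
  · rintro h z ⟨k, c, g, hc, hg, rfl⟩
    have : pairQ w (∑ j, c j • g j) = ∑ j, c j * pairQ w (g j) := by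
      induction (Finset.univ : Finset (Fin k)) using Finset.cons_induction with
      | empty => simp [pairQ, dotZQ]
      | cons a s ha ih => rw [Finset.sum_cons, Finset.sum_cons, pairQ_addRight,
          pairQ_smulRight, ih]
    rw [this]
    exact Finset.sum_nonneg fun j _ => mul_nonneg (hc j) (h _ (hg j))

lemma dotZQ_single {m : ℕ} (r : Fin m → ℤ) (i : Fin m) :
    dotZQ r (Pi.single i 1) = (r i : ℚ) := by
  rw [dotZQ, Finset.sum_eq_single i]
  · simp
  · intro b _ hb; simp [Pi.single_apply, hb]
  · simp

lemma mem_dual_sigmaTilde {n l : ℕ} {δ : Set (Fin n → ℚ)}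
    {Δ : Fin (l + 1) → Set (Fin n → ℚ)}
    {p : (Fin n → ℤ) × (Fin (l + 1) → ℤ)} :
    p ∈ dualMonoid (sigmaTilde δ Δ) ↔
      (∀ x ∈ δ, 0 ≤ dotZQ p.1 x) ∧ ∀ i, ∀ x ∈ Δ i, 0 ≤ dotZQ p.1 x + (p.2 i : ℚ) := by
  rw [sigmaTilde, mem_dualMonoid_coneGen]
  constructor
  · intro h
    constructor
    · intro x hx
      have := h (x, 0) (Or.inl ⟨hx, rfl⟩)
      simpa [pairQ, dotZQ] using this
    · intro i x hx
      have := h (x, Pi.single i 1) (Or.inr (Set.mem_iUnion.2 ⟨i, ⟨hx, rfl⟩⟩))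
      simpa [pairQ, dotZQ_single] using this
  · rintro ⟨h1, h2⟩ z (⟨hx, hz⟩ | hz)
    · obtain ⟨z1, z2⟩ := z
      simp only [Set.mem_singleton_iff] at hz
      cases hz
      simpa [pairQ, dotZQ] using h1 z1 hx
    · obtain ⟨i, ⟨hx, hz⟩⟩ := Set.mem_iUnion.1 hz
      obtain ⟨z1, z2⟩ := z
      simp only [Set.mem_singleton_iff] at hz
      cases hz
      simpa [pairQ, dotZQ_single] using h2 i z1 hx

lemma mem_dual_sigmaCayley {n : ℕ} {δ D : Set (Fin n → ℚ)}
    {p : (Fin n → ℤ) × (Fin 1 → ℤ)} :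
    p ∈ dualMonoid (sigmaCayley δ D) ↔
      (∀ x ∈ δ, 0 ≤ dotZQ p.1 x) ∧ ∀ z ∈ D, 0 ≤ dotZQ p.1 z + (p.2 0 : ℚ) := by
  rw [sigmaCayley, mem_dualMonoid_coneGen]
  have key : ∀ q : Fin 1 → ℤ, dotZQ q (fun _ => (1:ℚ)) = (q 0 : ℚ) := by
    intro q; simp [dotZQ, Finset.sum_fin_eq_sum_range, Finset.sum_range_one]
  constructor
  · intro h
    constructor
    · intro x hx
      have := h (x, 0) (Or.inl ⟨hx, rfl⟩)
      simpa [pairQ, dotZQ] using this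
    · intro z hz
      have := h (z, fun _ => 1) (Or.inr ⟨hz, rfl⟩)
      simpa [pairQ, key] using this
  · rintro ⟨h1, h2⟩ z (⟨hx, hz⟩ | ⟨hx, hz⟩) <;> obtain ⟨z1, z2⟩ := z <;>
      simp only [Set.mem_singleton_iff] at hz <;> cases hz
    · simpa [pairQ, dotZQ] using h1 z1 hx
    · simpa [pairQ, key] using h2 z1 hx

end Base
section Beta

open scoped Classical

variable {n l : ℕ} (δ : Set (Fin n → ℚ)) (Δ : Fin (l + 1) → Set (Fin n → ℚ))

/-- The set of admissible `i`-th exponents over `u`. -/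
def Aset (u : Fin n → ℤ) (i : Fin (l + 1)) : Set ℤ :=
  { r | ∀ x ∈ Δ i, 0 ≤ dotZQ u x + (r : ℚ) }

lemma Aset_upward {u : Fin n → ℤ} {i : Fin (l + 1)} {r r' : ℤ} (h : r ∈ Aset Δ u i)
    (hle : r ≤ r') : r' ∈ Aset Δ u i := fun x hx => by
  have h1 := h x hx
  have h2 : (r : ℚ) ≤ r' := by exact_mod_cast hle
  linarith

lemma mem_S_iff {p : (Fin n → ℤ) × (Fin (l + 1) → ℤ)} :
    p ∈ dualMonoid (sigmaTilde δ Δ) ↔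
      (∀ x ∈ δ, 0 ≤ dotZQ p.1 x) ∧ ∀ i, p.2 i ∈ Aset Δ p.1 i :=
  mem_dual_sigmaTilde

lemma Aset_bddBelow (hne : ∀ i, (Δ i).Nonempty) {u : Fin n → ℤ} (i : Fin (l + 1)) :
    ∃ b : ℤ, ∀ r : ℤ, r ∈ Aset Δ u i → b ≤ r := by
  obtain ⟨x₀, hx₀⟩ := hne i
  refine ⟨-⌈dotZQ u x₀⌉, fun r hr => ?_⟩
  have h1 := hr x₀ hx₀
  have h2 : (-r : ℚ) ≤ dotZQ u x₀ := by push_cast; linarith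
  have h3 : dotZQ u x₀ ≤ (⌈dotZQ u x₀⌉ : ℚ) := Int.le_ceil _
  have h4 : ((-r : ℤ) : ℚ) ≤ ((⌈dotZQ u x₀⌉ : ℤ) : ℚ) := by push_cast; linarith
  have h5 : -r ≤ ⌈dotZQ u x₀⌉ := by exact_mod_cast h4
  omega

/-- The least admissible `i`-th exponent over `u` (when one exists). -/
noncomputable def beta (hne : ∀ i, (Δ i).Nonempty) (u : Fin n → ℤ) (i : Fin (l + 1)) : ℤ :=
  if h : ∃ r : ℤ, r ∈ Aset Δ u i then
    Classical.choose (Int.exists_least_of_bdd (Aset_bddBelow Δ hne i) h)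
  else 0

variable (hne : ∀ i, (Δ i).Nonempty)

lemma beta_mem {u : Fin n → ℤ} {i : Fin (l + 1)} (h : ∃ r : ℤ, r ∈ Aset Δ u i) :
    beta Δ hne u i ∈ Aset Δ u i := by
  rw [beta, dif_pos h]
  exact (Classical.choose_spec (Int.exists_least_of_bdd (Aset_bddBelow Δ hne i) h)).1

lemma beta_le {u : Fin n → ℤ} {i : Fin (l + 1)} {r : ℤ} (hr : r ∈ Aset Δ u i) :
    beta Δ hne u i ≤ r := by
  rw [beta, dif_pos ⟨r, hr⟩]
  exact (Classical.choose_spec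
    (Int.exists_least_of_bdd (Aset_bddBelow Δ hne i) ⟨r, hr⟩)).2 r hr

lemma mem_Aset_iff {u : Fin n → ℤ} {i : Fin (l + 1)} (h : ∃ r : ℤ, r ∈ Aset Δ u i)
    {r : ℤ} : r ∈ Aset Δ u i ↔ beta Δ hne u i ≤ r :=
  ⟨beta_le Δ hne, fun hle => Aset_upward Δ (beta_mem Δ hne h) hle⟩

end Beta
section Part1

open MvPolynomial

variable {n l : ℕ} (δ : Set (Fin n → ℚ)) (Δ : Fin (l + 1) → Set (Fin n → ℚ))

/-- The family `t` of the theorem. -/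
noncomputable def tdef (w : Fin (l + 1) → dualMonoid (sigmaTilde δ Δ)) :
    Fin l → AddMonoidAlgebra ℂ (dualMonoid (sigmaTilde δ Δ)) := fun i =>
  AddMonoidAlgebra.single (w i.succ) 1 - AddMonoidAlgebra.single (w 0) 1

variable (hne : ∀ i, (Δ i).Nonempty)
  (w : Fin (l + 1) → dualMonoid (sigmaTilde δ Δ))
  (hw : ∀ i, (w i : (Fin n → ℤ) × (Fin (l + 1) → ℤ)) = ((0 : Fin n → ℤ), Pi.single i 1))

/-- Exponent vector of a dual-monoid element relative to the minimal one. -/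
noncomputable def eexp (a : dualMonoid (sigmaTilde δ Δ)) : Fin (l + 1) →₀ ℕ :=
  Finsupp.equivFunOnFinite.symm
    (fun j => ((a : (Fin n → ℤ) × (Fin (l + 1) → ℤ)).2 j -
      beta Δ hne (a : (Fin n → ℤ) × (Fin (l + 1) → ℤ)).1 j).toNat)

lemma coord_mem_Aset (a : dualMonoid (sigmaTilde δ Δ)) (j : Fin (l + 1)) :
    (a : (Fin n → ℤ) × (Fin (l + 1) → ℤ)).2 j ∈
      Aset Δ (a : (Fin n → ℤ) × (Fin (l + 1) → ℤ)).1 j :=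
  ((mem_S_iff δ Δ).1 a.2).2 j

lemma beta_le_coord (a : dualMonoid (sigmaTilde δ Δ)) (j : Fin (l + 1)) :
    beta Δ hne (a : (Fin n → ℤ) × (Fin (l + 1) → ℤ)).1 j ≤
      (a : (Fin n → ℤ) × (Fin (l + 1) → ℤ)).2 j :=
  beta_le Δ hne (coord_mem_Aset δ Δ a j)

include hw in
lemma coe_add_w (a : dualMonoid (sigmaTilde δ Δ)) (j : Fin (l + 1)) :
    ((a + w j : dualMonoid (sigmaTilde δ Δ)) : (Fin n → ℤ) × (Fin (l + 1) → ℤ)) =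
      ((a : (Fin n → ℤ) × (Fin (l + 1) → ℤ)).1,
       (a : (Fin n → ℤ) × (Fin (l + 1) → ℤ)).2 + Pi.single j 1) := by
  rw [AddSubmonoid.coe_add, hw j]
  ext x
  · simp
  · simp

include hw in
lemma eexp_add_w (a : dualMonoid (sigmaTilde δ Δ)) (j : Fin (l + 1)) :
    eexp δ Δ hne (a + w j) = eexp δ Δ hne a + Finsupp.single j 1 := by
  have hc := coe_add_w δ Δ w hw a j
  ext j'
  simp only [eexp, Finsupp.add_apply, Finsupp.coe_equivFunOnFinite_symm, hc,
    Pi.add_apply]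
  have hb := beta_le_coord δ Δ hne a j'
  rcases eq_or_ne j' j with rfl | hne'
  · simp only [Pi.single_eq_same, Finsupp.single_eq_same]
    omega
  · simp only [Pi.single_eq_of_ne hne', Finsupp.single_eq_of_ne' (Ne.symm hne')]
    omega

/-- The change-of-variables map `ℂ[y₀,…,y_l] → (ℂ[x₁,…,x_l])[X]`,
`y₀ ↦ X`, `y_{i+1} ↦ X + C x_i`. -/
noncomputable def tau : MvPolynomial (Fin (l + 1)) ℂ →ₐ[ℂ]
    Polynomial (MvPolynomial (Fin l) ℂ) :=
  MvPolynomial.aeval (fun j => Fin.cases Polynomial.X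
    (fun i => Polynomial.X + Polynomial.C (MvPolynomial.X i)) j)

lemma tau_X_succ (i : Fin l) :
    tau (l := l) (MvPolynomial.X i.succ) = Polynomial.X + Polynomial.C (MvPolynomial.X i) := by
  simp [tau]

lemma tau_X_zero : tau (l := l) (MvPolynomial.X 0) = Polynomial.X := by
  simp [tau]

/-- The auxiliary linear "normal form" map `Φᵤ`. -/
noncomputable def Phi (u : Fin n → ℤ) :
    AddMonoidAlgebra ℂ (dualMonoid (sigmaTilde δ Δ)) →ₗ[ℂ]
      Polynomial (MvPolynomial (Fin l) ℂ) :=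
  Finsupp.lift _ ℂ _ (fun a : dualMonoid (sigmaTilde δ Δ) =>
    if (a : (Fin n → ℤ) × (Fin (l + 1) → ℤ)).1 = u then
      tau (MvPolynomial.monomial (eexp δ Δ hne a) 1) else 0) ∘ₗ
    (AddMonoidAlgebra.coeffLinearEquiv ℂ).toLinearMap

lemma Phi_single (u : Fin n → ℤ) (a : dualMonoid (sigmaTilde δ Δ)) (c : ℂ) :
    Phi δ Δ hne u (AddMonoidAlgebra.single a c) =
      c • (if (a : (Fin n → ℤ) × (Fin (l + 1) → ℤ)).1 = u then
        tau (MvPolynomial.monomial (eexp δ Δ hne a) 1) else 0) := by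
  have : Phi δ Δ hne u (AddMonoidAlgebra.single a c) =
      (Finsupp.single a c : dualMonoid (sigmaTilde δ Δ) →₀ ℂ).sum
        (fun a' c' => c' • (if (a' : (Fin n → ℤ) × (Fin (l + 1) → ℤ)).1 = u then
          tau (MvPolynomial.monomial (eexp δ Δ hne a') 1) else 0)) := by
    rw [Phi]
    exact Finsupp.lift_apply ..
  rw [this, Finsupp.sum_single_index (by simp)]

end Part1
section Part1b

open MvPolynomial

variable {n l : ℕ} (δ : Set (Fin n → ℚ)) (Δ : Fin (l + 1) → Set (Fin n → ℚ))
  (hne : ∀ i, (Δ i).Nonempty)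
  (w : Fin (l + 1) → dualMonoid (sigmaTilde δ Δ))
  (hw : ∀ i, (w i : (Fin n → ℤ) × (Fin (l + 1) → ℤ)) = ((0 : Fin n → ℤ), Pi.single i 1))

include hw in
lemma Phi_w_mul (u : Fin n → ℤ) (j : Fin (l + 1))
    (v : AddMonoidAlgebra ℂ (dualMonoid (sigmaTilde δ Δ))) :
    Phi δ Δ hne u (AddMonoidAlgebra.single (w j) 1 * v) =
      tau (MvPolynomial.X j) * Phi δ Δ hne u v := by
  induction v using AddMonoidAlgebra.induction_linear with
  | zero => simp
  | add f g hf hg => rw [mul_add, map_add, hf, hg, map_add, mul_add]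
  | single a c =>
    rw [AddMonoidAlgebra.single_mul_single, one_mul]
    rw [Phi_single, Phi_single]
    have hfst : ((w j + a : dualMonoid (sigmaTilde δ Δ)) :
        (Fin n → ℤ) × (Fin (l + 1) → ℤ)).1 = (a : (Fin n → ℤ) × (Fin (l + 1) → ℤ)).1 := by
      rw [AddSubmonoid.coe_add, hw j]
      simp
    by_cases hu : (a : (Fin n → ℤ) × (Fin (l + 1) → ℤ)).1 = u
    · rw [if_pos (hfst.trans hu), if_pos hu]
      rw [show w j + a = a + w j from add_comm _ _, eexp_add_w δ Δ hne w hw a j]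
      rw [show (MvPolynomial.monomial (eexp δ Δ hne a + Finsupp.single j 1) (1:ℂ))
          = MvPolynomial.monomial (eexp δ Δ hne a) 1 * MvPolynomial.X j by
        rw [MvPolynomial.X, MvPolynomial.monomial_mul, mul_one]]
      rw [map_mul]
      rw [mul_smul_comm]
      ring_nf
    · rw [if_neg (fun h => hu (hfst.symm.trans h)), if_neg hu]
      simp

include hw in
lemma Phi_t_mul (u : Fin n → ℤ) (i : Fin l)
    (v : AddMonoidAlgebra ℂ (dualMonoid (sigmaTilde δ Δ))) :
    Phi δ Δ hne u (tdef δ Δ w i * v) =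
      Polynomial.C (MvPolynomial.X i) * Phi δ Δ hne u v := by
  rw [tdef, sub_mul, map_sub, Phi_w_mul δ Δ hne w hw, Phi_w_mul δ Δ hne w hw,
    tau_X_succ, tau_X_zero]
  ring

include hw in
lemma Phi_aeval_mul (u : Fin n → ℤ) (p : MvPolynomial (Fin l) ℂ)
    (v : AddMonoidAlgebra ℂ (dualMonoid (sigmaTilde δ Δ))) :
    Phi δ Δ hne u (MvPolynomial.aeval (tdef δ Δ w) p * v) =
      Polynomial.C p * Phi δ Δ hne u v := by
  induction p using MvPolynomial.induction_on generalizing v with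
  | C a =>
    rw [MvPolynomial.aeval_C, ← Algebra.smul_def, map_smul]
    rw [show (Polynomial.C (MvPolynomial.C a : MvPolynomial (Fin l) ℂ))
        = algebraMap ℂ (Polynomial (MvPolynomial (Fin l) ℂ)) a from rfl, ← Algebra.smul_def]
  | add p q hp hq => rw [map_add, add_mul, map_add, hp, hq, map_add, add_mul]
  | mul_X p i hp =>
    rw [show (MvPolynomial.aeval (tdef δ Δ w)) (p * MvPolynomial.X i)
        = (MvPolynomial.aeval (tdef δ Δ w)) p * tdef δ Δ w i by
      rw [map_mul, MvPolynomial.aeval_X]]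
    rw [mul_assoc, hp, Phi_t_mul δ Δ hne w hw]
    rw [show (Polynomial.C (p * MvPolynomial.X i))
        = Polynomial.C p * Polynomial.C (MvPolynomial.X i) from map_mul _ _ _]
    ring

end Part1b
section Part1c

open MvPolynomial

variable {n l : ℕ} (δ : Set (Fin n → ℚ)) (Δ : Fin (l + 1) → Set (Fin n → ℚ))
  (hne : ∀ i, (Δ i).Nonempty)
  (w : Fin (l + 1) → dualMonoid (sigmaTilde δ Δ))
  (hw : ∀ i, (w i : (Fin n → ℤ) × (Fin (l + 1) → ℤ)) = ((0 : Fin n → ℤ), Pi.single i 1))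

/-- Reduced elements: exponents minimal away from coordinate `0`. -/
def Reduced (a : dualMonoid (sigmaTilde δ Δ)) : Prop :=
  ∀ j : Fin (l + 1), j ≠ 0 →
    (a : (Fin n → ℤ) × (Fin (l + 1) → ℤ)).2 j =
      beta Δ hne (a : (Fin n → ℤ) × (Fin (l + 1) → ℤ)).1 j

lemma Phi_reduced (a : dualMonoid (sigmaTilde δ Δ)) (h : Reduced δ Δ hne a) :
    Phi δ Δ hne (a : (Fin n → ℤ) × (Fin (l + 1) → ℤ)).1 (AddMonoidAlgebra.single a 1) =
      Polynomial.X ^ (eexp δ Δ hne a 0) := by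
  rw [Phi_single, if_pos rfl, one_smul]
  have he : eexp δ Δ hne a = Finsupp.single 0 (eexp δ Δ hne a 0) := by
    ext j
    rcases eq_or_ne j 0 with rfl | hj
    · simp
    · rw [Finsupp.single_eq_of_ne' (Ne.symm hj)]
      simp only [eexp, Finsupp.coe_equivFunOnFinite_symm]
      rw [h j hj]
      simp
  conv_lhs => rw [he, ← MvPolynomial.X_pow_eq_monomial]
  rw [map_pow, tau_X_zero]

lemma reduced_inj (a a' : dualMonoid (sigmaTilde δ Δ)) (ha : Reduced δ Δ hne a)
    (ha' : Reduced δ Δ hne a')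
    (h1 : (a : (Fin n → ℤ) × (Fin (l + 1) → ℤ)).1 =
      (a' : (Fin n → ℤ) × (Fin (l + 1) → ℤ)).1)
    (h2 : eexp δ Δ hne a 0 = eexp δ Δ hne a' 0) : a = a' := by
  apply Subtype.ext
  have hr : ∀ j, (a : (Fin n → ℤ) × (Fin (l + 1) → ℤ)).2 j =
      (a' : (Fin n → ℤ) × (Fin (l + 1) → ℤ)).2 j := by
    intro j
    rcases eq_or_ne j 0 with rfl | hj
    · simp only [eexp, Finsupp.coe_equivFunOnFinite_symm] at h2
      have hb := beta_le_coord δ Δ hne a 0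
      have hb' := beta_le_coord δ Δ hne a' 0
      rw [h1] at hb h2
      omega
    · rw [ha j hj, ha' j hj, h1]
  exact Prod.ext h1 (funext hr)

/-- The measure used for the spanning induction. -/
noncomputable def mval (a : dualMonoid (sigmaTilde δ Δ)) : ℕ :=
  ∑ j ∈ Finset.univ.erase 0,
    ((a : (Fin n → ℤ) × (Fin (l + 1) → ℤ)).2 j -
      beta Δ hne (a : (Fin n → ℤ) × (Fin (l + 1) → ℤ)).1 j).toNat

include hne hw in
theorem part1_flat :
    letI : Algebra (MvPolynomial (Fin l) ℂ)
        (AddMonoidAlgebra ℂ (dualMonoid (sigmaTilde δ Δ))) :=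
      ((MvPolynomial.aeval (tdef δ Δ w)).toRingHom).toAlgebra
    Module.Flat (MvPolynomial (Fin l) ℂ)
      (AddMonoidAlgebra ℂ (dualMonoid (sigmaTilde δ Δ))) := by
  letI P := MvPolynomial (Fin l) ℂ
  letI R := AddMonoidAlgebra ℂ (dualMonoid (sigmaTilde δ Δ))
  letI : Algebra P R := ((MvPolynomial.aeval (tdef δ Δ w)).toRingHom).toAlgebra
  have hsmul : ∀ (p : P) (v : R), p • v = MvPolynomial.aeval (tdef δ Δ w) p * v := by
    intro p v
    rw [Algebra.smul_def, RingHom.algebraMap_toAlgebra]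
    rfl
  set bfun : {a : dualMonoid (sigmaTilde δ Δ) // Reduced δ Δ hne a} → R :=
    fun a => AddMonoidAlgebra.single a.1 1 with hbfun
  -- linear independence
  have hLI : LinearIndependent P bfun := by
    rw [linearIndependent_iff']
    intro s g hsum i₀ hi₀
    set u := (i₀.1 : (Fin n → ℤ) × (Fin (l + 1) → ℤ)).1 with hu
    have happ := congrArg (Phi δ Δ hne u) hsum
    rw [map_sum, map_zero] at happ
    have hterm : ∀ i ∈ s, Phi δ Δ hne u (g i • bfun i) =
        Polynomial.C (g i) * Phi δ Δ hne u (bfun i) := by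
      intro i _
      rw [hsmul, Phi_aeval_mul δ Δ hne w hw]
    rw [Finset.sum_congr rfl hterm] at happ
    have hco := congrArg (fun q => Polynomial.coeff q (eexp δ Δ hne i₀.1 0)) happ
    simp only [Polynomial.finset_sum_coeff, Polynomial.coeff_zero] at hco
    rw [Finset.sum_eq_single i₀ ?_ (fun h => absurd hi₀ h)] at hco
    · rw [hbfun, Phi_reduced δ Δ hne i₀.1 i₀.2] at hco
      rw [Polynomial.coeff_C_mul, Polynomial.coeff_X_pow, if_pos rfl, mul_one] at hco
      exact hco
    · intro i hi hne'
      rw [hbfun]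
      simp only
      rw [Phi_single]
      by_cases hmatch : ((i.1 : dualMonoid (sigmaTilde δ Δ)) :
          (Fin n → ℤ) × (Fin (l + 1) → ℤ)).1 = u
      · rw [if_pos hmatch, one_smul]
        have : Phi δ Δ hne u (AddMonoidAlgebra.single i.1 1) =
            Polynomial.X ^ (eexp δ Δ hne i.1 0) := by
          rw [← hmatch]
          exact Phi_reduced δ Δ hne i.1 i.2
        rw [Phi_single, if_pos hmatch, one_smul] at this
        rw [this, Polynomial.coeff_C_mul, Polynomial.coeff_X_pow]
        have hk : eexp δ Δ hne i₀.1 0 ≠ eexp δ Δ hne i.1 0 := by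
          intro hk
          exact hne' (Subtype.ext (reduced_inj δ Δ hne i.1 i₀.1 i.2 i₀.2
            (hmatch.trans hu) hk.symm))
        rw [if_neg hk]
        exact mul_zero _
      · rw [if_neg hmatch, one_smul, mul_zero, Polynomial.coeff_zero]
  -- spanning
  have hspan : ∀ a : dualMonoid (sigmaTilde δ Δ),
      AddMonoidAlgebra.single a (1:ℂ) ∈ Submodule.span P (Set.range bfun) := by
    have key : ∀ N : ℕ, ∀ a : dualMonoid (sigmaTilde δ Δ), mval δ Δ hne a = N →
        AddMonoidAlgebra.single a (1:ℂ) ∈ Submodule.span P (Set.range bfun) := by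
      intro N
      induction N using Nat.strong_induction_on with
      | _ N ih =>
        intro a hN
        by_cases hred : Reduced δ Δ hne a
        · exact Submodule.subset_span ⟨⟨a, hred⟩, rfl⟩
        · rw [Reduced] at hred
          push_neg at hred
          obtain ⟨j, hj0, hjne⟩ := hred
          have hgt : beta Δ hne (a : (Fin n → ℤ) × (Fin (l + 1) → ℤ)).1 j <
              (a : (Fin n → ℤ) × (Fin (l + 1) → ℤ)).2 j :=
            lt_of_le_of_ne (beta_le_coord δ Δ hne a j) (Ne.symm hjne)
          set a' : dualMonoid (sigmaTilde δ Δ) :=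
            ⟨((a : (Fin n → ℤ) × (Fin (l + 1) → ℤ)).1,
              (a : (Fin n → ℤ) × (Fin (l + 1) → ℤ)).2 - Pi.single j 1), by
            rw [mem_S_iff]
            refine ⟨((mem_S_iff δ Δ).1 a.2).1, fun j' => ?_⟩
            simp only [Pi.sub_apply]
            rcases eq_or_ne j' j with rfl | hj'
            · rw [Pi.single_eq_same]
              exact (mem_Aset_iff Δ hne ⟨_, coord_mem_Aset δ Δ a j'⟩).2 (by omega)
            · rw [Pi.single_eq_of_ne hj']
              simpa using coord_mem_Aset δ Δ a j'⟩ with ha'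
          have hcoe : (a' : (Fin n → ℤ) × (Fin (l + 1) → ℤ)) =
              ((a : (Fin n → ℤ) × (Fin (l + 1) → ℤ)).1,
               (a : (Fin n → ℤ) × (Fin (l + 1) → ℤ)).2 - Pi.single j 1) := rfl
          have ha : w j + a' = a := by
            apply Subtype.ext
            rw [AddSubmonoid.coe_add, hw j, hcoe]
            ext x
            · simp
            · simp
          have hsucc : (j.pred hj0).succ = j := Fin.succ_pred j hj0
          have hsplit : AddMonoidAlgebra.single a (1:ℂ) =
              tdef δ Δ w (j.pred hj0) * AddMonoidAlgebra.single a' 1 +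
                AddMonoidAlgebra.single (w 0 + a') 1 := by
            rw [tdef, sub_mul, AddMonoidAlgebra.single_mul_single,
              AddMonoidAlgebra.single_mul_single, one_mul, hsucc, ha]
            abel
          have hjE : j ∈ Finset.univ.erase (0 : Fin (l + 1)) :=
            Finset.mem_erase.2 ⟨hj0, Finset.mem_univ j⟩
          have e1 : mval δ Δ hne a' =
              ((a : (Fin n → ℤ) × (Fin (l + 1) → ℤ)).2 j - 1 -
                beta Δ hne (a : (Fin n → ℤ) × (Fin (l + 1) → ℤ)).1 j).toNat +
              ∑ j' ∈ (Finset.univ.erase (0 : Fin (l + 1))).erase j,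
                ((a : (Fin n → ℤ) × (Fin (l + 1) → ℤ)).2 j' -
                  beta Δ hne (a : (Fin n → ℤ) × (Fin (l + 1) → ℤ)).1 j').toNat := by
            rw [mval, ← Finset.add_sum_erase _ _ hjE]
            congr 1
            · rw [hcoe]
              simp [Pi.single_eq_same]
            · refine Finset.sum_congr rfl fun j' hj' => ?_
              have hj'j : j' ≠ j := (Finset.mem_erase.1 hj').1
              rw [hcoe]
              simp [Pi.single_eq_of_ne hj'j]
          have e2 : N =
              ((a : (Fin n → ℤ) × (Fin (l + 1) → ℤ)).2 j -
                beta Δ hne (a : (Fin n → ℤ) × (Fin (l + 1) → ℤ)).1 j).toNat +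
              ∑ j' ∈ (Finset.univ.erase (0 : Fin (l + 1))).erase j,
                ((a : (Fin n → ℤ) × (Fin (l + 1) → ℤ)).2 j' -
                  beta Δ hne (a : (Fin n → ℤ) × (Fin (l + 1) → ℤ)).1 j').toNat := by
            rw [← hN, mval, ← Finset.add_sum_erase _ _ hjE]
          have hma' : mval δ Δ hne a' + 1 = N := by
            rw [e1, e2]
            omega
          have hmw : mval δ Δ hne (w 0 + a') = mval δ Δ hne a' := by
            rw [mval, mval]
            refine Finset.sum_congr rfl fun j' hj' => ?_
            have hj'0 : j' ≠ 0 := (Finset.mem_erase.1 hj').1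
            rw [show w 0 + a' = a' + w 0 from add_comm _ _, coe_add_w δ Δ w hw a' 0]
            simp [Pi.single_eq_of_ne hj'0]
          have hmem' : AddMonoidAlgebra.single a' (1:ℂ) ∈
              Submodule.span P (Set.range bfun) :=
            ih (mval δ Δ hne a') (by omega) a' rfl
          have hmem'' : AddMonoidAlgebra.single (w 0 + a') (1:ℂ) ∈
              Submodule.span P (Set.range bfun) :=
            ih (mval δ Δ hne (w 0 + a')) (by omega) _ rfl
          rw [hsplit]
          refine Submodule.add_mem _ ?_ hmem''
          have ht : tdef δ Δ w (j.pred hj0) * AddMonoidAlgebra.single a' 1 =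
              (MvPolynomial.X (j.pred hj0) : P) • AddMonoidAlgebra.single a' (1:ℂ) := by
            rw [hsmul, MvPolynomial.aeval_X]
          rw [ht]
          exact Submodule.smul_mem _ _ hmem'
    exact fun a => key (mval δ Δ hne a) a rfl
  have htop : ⊤ ≤ Submodule.span P (Set.range bfun) := by
    intro v _
    induction v using AddMonoidAlgebra.induction_linear with
    | zero => exact Submodule.zero_mem _
    | add f g hf hg =>
      exact Submodule.add_mem _ (hf Submodule.mem_top) (hg Submodule.mem_top)
    | single a c =>
      have h1 : (AddMonoidAlgebra.single a c :
          AddMonoidAlgebra ℂ (dualMonoid (sigmaTilde δ Δ))) =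
          (MvPolynomial.C c : P) • AddMonoidAlgebra.single a 1 := by
        rw [hsmul, MvPolynomial.aeval_C, ← Algebra.smul_def, AddMonoidAlgebra.smul_single', mul_one]
      show AddMonoidAlgebra.single a c ∈ _
      rw [h1]
      exact Submodule.smul_mem _ _ (hspan a)
  letI : Module.Free P (AddMonoidAlgebra ℂ (dualMonoid (sigmaTilde δ Δ))) :=
    Module.Free.of_basis (Module.Basis.mk hLI htop)
  infer_instance

end Part1c
section Part2a

lemma mem_finset_sum_sets {ι V : Type*} [AddCommMonoid V] (s : Finset ι) (F : ι → Set V)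
    (g : ι → V) (h : ∀ i ∈ s, g i ∈ F i) : ∑ i ∈ s, g i ∈ ∑ i ∈ s, F i := by
  classical
  induction s using Finset.cons_induction with
  | empty => simp
  | cons a s ha ih =>
    rw [Finset.sum_cons, Finset.sum_cons]
    exact Set.add_mem_add (h a (Finset.mem_cons_self a s))
      (ih fun i hi => h i (Finset.mem_cons_of_mem hi))

lemma exists_of_mem_finset_sum_sets {ι V : Type*} [AddCommMonoid V] (s : Finset ι)
    (F : ι → Set V) {z : V} (hz : z ∈ ∑ i ∈ s, F i) :
    ∃ g : ι → V, (∀ i ∈ s, g i ∈ F i) ∧ z = ∑ i ∈ s, g i := by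
  classical
  induction s using Finset.cons_induction generalizing z with
  | empty =>
    refine ⟨fun _ => 0, by simp, ?_⟩
    simpa using hz
  | cons a s ha ih =>
    rw [Finset.sum_cons] at hz
    obtain ⟨y, hy, z', hz', rfl⟩ := Set.mem_add.1 hz
    obtain ⟨g, hg, rfl⟩ := ih hz'
    refine ⟨fun i => if i = a then y else g i, ?_, ?_⟩
    · intro i hi
      rcases Finset.mem_cons.1 hi with rfl | hi'
      · simp [hy]
      · have : i ≠ a := fun h => ha (h ▸ hi')
        simp only [if_neg this]
        exact hg i hi'
    · rw [Finset.sum_cons, if_pos rfl]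
      congr 1
      exact (Finset.sum_congr rfl fun i hi => by
        have : i ≠ a := fun h => ha (h ▸ hi)
        simp [this]).symm

lemma dotZQ_zero {n : ℕ} (u : Fin n → ℤ) : dotZQ u 0 = 0 := by simp [dotZQ]

lemma dotZQ_finset_sum {n : ℕ} {ι : Type*} (u : Fin n → ℤ) (s : Finset ι)
    (g : ι → Fin n → ℚ) : dotZQ u (∑ i ∈ s, g i) = ∑ i ∈ s, dotZQ u (g i) := by
  classical
  induction s using Finset.cons_induction with
  | empty => simp [dotZQ_zero]
  | cons a s ha ih => rw [Finset.sum_cons, Finset.sum_cons, dotZQ_addRight, ih]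

variable {n l : ℕ} (δ : Set (Fin n → ℚ)) (Δ : Fin (l + 1) → Set (Fin n → ℚ))

/-- The degree-summing monoid map from `σ̃^∨ ∩ M` to `σ^∨ ∩ M`. -/
noncomputable def phiAdd : dualMonoid (sigmaTilde δ Δ) →+
    dualMonoid (sigmaCayley δ (∑ i, Δ i)) where
  toFun a := ⟨((a : (Fin n → ℤ) × (Fin (l + 1) → ℤ)).1,
      fun _ => ∑ j, (a : (Fin n → ℤ) × (Fin (l + 1) → ℤ)).2 j), by
    obtain ⟨h1, h2⟩ := (mem_S_iff δ Δ).1 a.2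
    rw [mem_dual_sigmaCayley]
    refine ⟨h1, fun z hz => ?_⟩
    obtain ⟨g, hg, rfl⟩ := exists_of_mem_finset_sum_sets _ _ hz
    rw [dotZQ_finset_sum]
    have : ∀ j : Fin (l + 1), (0:ℚ) ≤ dotZQ (a : (Fin n → ℤ) × (Fin (l + 1) → ℤ)).1 (g j) +
        ((a : (Fin n → ℤ) × (Fin (l + 1) → ℤ)).2 j : ℚ) :=
      fun j => h2 j (g j) (hg j (Finset.mem_univ j))
    have hsum := Finset.sum_nonneg (fun j (_ : j ∈ Finset.univ) => this j)
    rw [Finset.sum_add_distrib] at hsum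
    push_cast
    exact hsum⟩
  map_zero' := by
    apply Subtype.ext
    refine Prod.ext rfl ?_
    funext x
    simp
  map_add' a b := by
    apply Subtype.ext
    simp only [AddSubmonoid.coe_add, Prod.fst_add, Prod.snd_add, Pi.add_apply,
      Prod.mk_add_mk]
    refine Prod.ext rfl ?_
    funext x
    simp [Finset.sum_add_distrib]

variable (w : Fin (l + 1) → dualMonoid (sigmaTilde δ Δ))
  (hw : ∀ i, (w i : (Fin n → ℤ) × (Fin (l + 1) → ℤ)) = ((0 : Fin n → ℤ), Pi.single i 1))

/-- The algebra map realizing the special fiber. -/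
noncomputable def Psi : AddMonoidAlgebra ℂ (dualMonoid (sigmaTilde δ Δ)) →ₐ[ℂ]
    AddMonoidAlgebra ℂ (dualMonoid (sigmaCayley δ (∑ i, Δ i))) :=
  AddMonoidAlgebra.mapDomainAlgHom ℂ ℂ (phiAdd δ Δ)

lemma Psi_single (a : dualMonoid (sigmaTilde δ Δ)) (c : ℂ) :
    Psi δ Δ (AddMonoidAlgebra.single a c) =
      AddMonoidAlgebra.single (phiAdd δ Δ a) c := by
  unfold Psi
  simp only [AddMonoidAlgebra.mapDomainAlgHom_apply]
  exact AddMonoidAlgebra.mapDomain_single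

include hw in
lemma phiAdd_w (j : Fin (l + 1)) :
    ((phiAdd δ Δ (w j) : dualMonoid (sigmaCayley δ (∑ i, Δ i))) :
      (Fin n → ℤ) × (Fin 1 → ℤ)) = ((0 : Fin n → ℤ), fun _ => 1) := by
  have : (phiAdd δ Δ (w j) : (Fin n → ℤ) × (Fin 1 → ℤ)) =
      ((w j : (Fin n → ℤ) × (Fin (l + 1) → ℤ)).1,
        fun _ => ∑ k, (w j : (Fin n → ℤ) × (Fin (l + 1) → ℤ)).2 k) := rfl
  rw [this, hw j]
  refine Prod.ext rfl ?_
  funext x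
  simp only
  rw [Finset.sum_eq_single j (fun b _ hb => Pi.single_eq_of_ne hb 1) (by simp)]
  simp

include hw in
lemma Psi_tdef (i : Fin l) : Psi δ Δ (tdef δ Δ w i) = 0 := by
  rw [tdef, map_sub, Psi_single, Psi_single, sub_eq_zero]
  congr 1
  apply Subtype.ext
  rw [phiAdd_w δ Δ w hw, phiAdd_w δ Δ w hw]

end Part2a
section Part2b

variable {n l : ℕ} (δ : Set (Fin n → ℚ)) (Δ : Fin (l + 1) → Set (Fin n → ℚ))

lemma phiAdd_surj_aux {u : Fin n → ℤ} {s : Fin 1 → ℤ}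
    (hb1 : ∀ x ∈ δ, 0 ≤ dotZQ u x)
    (hb2 : ∀ z ∈ ∑ i, Δ i, 0 ≤ dotZQ u z + (s 0 : ℚ))
    (i₀ : Fin (l + 1))
    (hgood : ∀ i, i ≠ i₀ → ∃ x ∈ faceOf (Δ i) (fun j => (u j : ℚ)), IsLatticePoint x)
    (b : dualMonoid (sigmaCayley δ (∑ i, Δ i)))
    (hb : (b : (Fin n → ℤ) × (Fin 1 → ℤ)) = (u, s)) :
    ∃ a, phiAdd δ Δ a = b := by
  classical
  have hx : ∀ i : Fin (l + 1), ∃ (x : Fin n → ℚ) (m : Fin n → ℤ),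
      i ≠ i₀ → (x ∈ faceOf (Δ i) (fun j => (u j : ℚ)) ∧ ∀ j, x j = m j) := by
    intro i
    by_cases hi : i = i₀
    · exact ⟨0, 0, fun h => absurd hi h⟩
    · obtain ⟨x, hxf, hlat⟩ := hgood i hi
      choose m hm using hlat
      exact ⟨x, m, fun _ => ⟨hxf, hm⟩⟩
  choose xp mp hxp using hx
  set d : Fin (l + 1) → ℤ := fun i => ∑ j, u j * mp i j with hd
  have hdot : ∀ i, i ≠ i₀ → dotZQ u (xp i) = (d i : ℚ) := by
    intro i hi
    rw [dotZQ, hd]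
    push_cast
    exact Finset.sum_congr rfl fun j _ => by rw [(hxp i hi).2 j]
  set r : Fin (l + 1) → ℤ := fun i =>
    if i = i₀ then s 0 + ∑ i' ∈ Finset.univ.erase i₀, d i' else -(d i) with hr
  have hi₀univ : i₀ ∈ (Finset.univ : Finset (Fin (l + 1))) := Finset.mem_univ _
  have hrS : ((u, r) : (Fin n → ℤ) × (Fin (l + 1) → ℤ)) ∈ dualMonoid (sigmaTilde δ Δ) := by
    rw [mem_S_iff]
    refine ⟨hb1, fun i x hxΔ => ?_⟩
    show (0:ℚ) ≤ dotZQ u x + ((r i : ℤ) : ℚ)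
    by_cases hi : i = i₀
    · subst hi
      set g : Fin (l + 1) → (Fin n → ℚ) := fun i' => if i' = i then x else xp i' with hg
      have hgmem : ∀ i' ∈ Finset.univ, g i' ∈ Δ i' := by
        intro i' _
        by_cases h' : i' = i
        · have hgx : g i' = x := by simp [hg, h']
          rw [hgx, h']
          exact hxΔ
        · have hgx : g i' = xp i' := by simp [hg, h']
          rw [hgx]
          exact (Set.mem_sep_iff.1 ((hxp i' h').1)).1
      have hz := hb2 _ (mem_finset_sum_sets Finset.univ Δ g hgmem)
      rw [dotZQ_finset_sum, ← Finset.add_sum_erase _ _ hi₀univ] at hz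
      have hgi : g i = x := by simp [hg]
      have hrest : ∀ i' ∈ Finset.univ.erase i, dotZQ u (g i') = (d i' : ℚ) := by
        intro i' hi'
        have h' : i' ≠ i := (Finset.mem_erase.1 hi').1
        have hgx : g i' = xp i' := by simp [hg, h']
        rw [hgx]
        exact hdot i' h'
      rw [hgi, Finset.sum_congr rfl hrest] at hz
      have hri : r i = s 0 + ∑ i' ∈ Finset.univ.erase i, d i' := if_pos rfl
      rw [hri]
      push_cast
      push_cast at hz
      linarith
    · have hface := Set.mem_sep_iff.1 (hxp i hi).1
      have hmin := hface.2 x hxΔ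
      have hdd := hdot i hi
      have hdle : (d i : ℚ) ≤ dotZQ u x := by
        rw [← hdd]
        exact hmin
      have hri : r i = -(d i) := if_neg hi
      rw [hri]
      push_cast
      linarith
  have hsum : ∑ i, r i = s 0 := by
    have h1 : ∀ i' ∈ Finset.univ.erase i₀, r i' = -(d i') := fun i' hi' =>
      if_neg (Finset.mem_erase.1 hi').1
    rw [← Finset.add_sum_erase _ r hi₀univ, Finset.sum_congr rfl h1]
    have hri : r i₀ = s 0 + ∑ i' ∈ Finset.univ.erase i₀, d i' := if_pos rfl
    rw [hri, Finset.sum_neg_distrib]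
    ring
  refine ⟨⟨(u, r), hrS⟩, ?_⟩
  apply Subtype.ext
  rw [hb]
  have hco : ((phiAdd δ Δ ⟨(u, r), hrS⟩ : dualMonoid (sigmaCayley δ (∑ i, Δ i))) :
      (Fin n → ℤ) × (Fin 1 → ℤ)) = (u, fun _ => ∑ j, r j) := rfl
  rw [hco]
  refine Prod.ext rfl ?_
  funext x
  have hx0 : x = 0 := Subsingleton.elim x 0
  rw [hx0]
  simpa using hsum

lemma phiAdd_surjective
    (hadm : ∀ u, (∀ x ∈ δ, 0 ≤ ∑ i, u i * x i) →
      ∀ i₁ i₂ : Fin (l + 1),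
        (¬ ∃ x ∈ faceOf (Δ i₁) u, IsLatticePoint x) →
        (¬ ∃ x ∈ faceOf (Δ i₂) u, IsLatticePoint x) → i₁ = i₂) :
    Function.Surjective (phiAdd δ Δ) := by
  classical
  intro b
  obtain ⟨hb1, hb2⟩ := mem_dual_sigmaCayley.1 b.2
  by_cases hex : ∃ i : Fin (l + 1),
      ¬ ∃ x ∈ faceOf (Δ i) (fun j => ((b : (Fin n → ℤ) × (Fin 1 → ℤ)).1 j : ℚ)),
        IsLatticePoint x
  · refine phiAdd_surj_aux δ Δ hb1 hb2 hex.choose (fun i hi => ?_) b rfl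
    by_contra hbad
    exact hi (hadm _ (fun x hx => hb1 x hx) i hex.choose hbad hex.choose_spec)
  · push_neg at hex
    exact phiAdd_surj_aux δ Δ hb1 hb2 0 (fun i _ => hex i) b rfl

lemma Psi_surjective
    (hadm : ∀ u, (∀ x ∈ δ, 0 ≤ ∑ i, u i * x i) →
      ∀ i₁ i₂ : Fin (l + 1),
        (¬ ∃ x ∈ faceOf (Δ i₁) u, IsLatticePoint x) →
        (¬ ∃ x ∈ faceOf (Δ i₂) u, IsLatticePoint x) → i₁ = i₂) :
    Function.Surjective (Psi δ Δ) := by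
  intro v
  induction v using AddMonoidAlgebra.induction_linear with
  | zero => exact ⟨0, map_zero _⟩
  | add f g hf hg =>
    obtain ⟨a, ha⟩ := hf
    obtain ⟨b, hb⟩ := hg
    exact ⟨a + b, by rw [map_add, ha, hb]⟩
  | single b c =>
    obtain ⟨a, ha⟩ := phiAdd_surjective δ Δ hadm b
    exact ⟨AddMonoidAlgebra.single a c, by rw [Psi_single, ha]⟩

end Part2b
section Part2c

variable {n l : ℕ} (δ : Set (Fin n → ℚ)) (Δ : Fin (l + 1) → Set (Fin n → ℚ))
  (w : Fin (l + 1) → dualMonoid (sigmaTilde δ Δ))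
  (hw : ∀ i, (w i : (Fin n → ℤ) × (Fin (l + 1) → ℤ)) = ((0 : Fin n → ℤ), Pi.single i 1))

include hw in
lemma w_diff_mem_span (j : Fin (l + 1)) (hj : j ≠ 0) :
    AddMonoidAlgebra.single (w j) (1:ℂ) - AddMonoidAlgebra.single (w 0) 1 ∈
      Ideal.span (Set.range (tdef δ Δ w)) :=
  Ideal.subset_span ⟨j.pred hj, by rw [tdef, Fin.succ_pred]⟩

include hw in
lemma w_pair_diff_mem_span (j k : Fin (l + 1)) :
    AddMonoidAlgebra.single (w j) (1:ℂ) - AddMonoidAlgebra.single (w k) 1 ∈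
      Ideal.span (Set.range (tdef δ Δ w)) := by
  have hterm : ∀ j' : Fin (l + 1),
      AddMonoidAlgebra.single (w j') (1:ℂ) - AddMonoidAlgebra.single (w 0) 1 ∈
        Ideal.span (Set.range (tdef δ Δ w)) := by
    intro j'
    rcases eq_or_ne j' 0 with rfl | hj'
    · rw [sub_self]
      exact zero_mem _
    · exact w_diff_mem_span δ Δ w hw j' hj'
  have h := sub_mem (hterm j) (hterm k)
  rwa [sub_sub_sub_cancel_right] at h

lemma sum_pi_single_one (j : Fin (l + 1)) : ∑ k, Pi.single j (1:ℤ) k = 1 := by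
  rw [Finset.sum_eq_single j (fun b _ hb => Pi.single_eq_of_ne hb 1) (by simp)]
  simp

include hw in
lemma diff_mem_span : ∀ (N : ℕ) (a b : dualMonoid (sigmaTilde δ Δ)),
    (a : (Fin n → ℤ) × (Fin (l + 1) → ℤ)).1 = (b : (Fin n → ℤ) × (Fin (l + 1) → ℤ)).1 →
    (∑ j, (a : (Fin n → ℤ) × (Fin (l + 1) → ℤ)).2 j =
      ∑ j, (b : (Fin n → ℤ) × (Fin (l + 1) → ℤ)).2 j) →
    (∑ j, ((a : (Fin n → ℤ) × (Fin (l + 1) → ℤ)).2 j -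
      (b : (Fin n → ℤ) × (Fin (l + 1) → ℤ)).2 j).natAbs = N) →
    AddMonoidAlgebra.single a (1:ℂ) - AddMonoidAlgebra.single b 1 ∈
      Ideal.span (Set.range (tdef δ Δ w)) := by
  intro N
  induction N using Nat.strong_induction_on with
  | _ N ih =>
  intro a b h1 h2 hN
  by_cases hab : a = b
  · rw [hab, sub_self]
    exact zero_mem _
  · have hne2 : ∃ j, (a : (Fin n → ℤ) × (Fin (l + 1) → ℤ)).2 j ≠
        (b : (Fin n → ℤ) × (Fin (l + 1) → ℤ)).2 j := by
      by_contra hno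
      push_neg at hno
      exact hab (Subtype.ext (Prod.ext h1 (funext hno)))
    obtain ⟨j, hj⟩ := hne2
    have hexgt : ∃ jp, (b : (Fin n → ℤ) × (Fin (l + 1) → ℤ)).2 jp <
        (a : (Fin n → ℤ) × (Fin (l + 1) → ℤ)).2 jp := by
      by_contra hno
      push_neg at hno
      have hlt := Finset.sum_lt_sum (fun k (_ : k ∈ Finset.univ) => hno k)
        ⟨j, Finset.mem_univ j, lt_of_le_of_ne (hno j) hj⟩
      omega
    have hexlt : ∃ jm, (a : (Fin n → ℤ) × (Fin (l + 1) → ℤ)).2 jm <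
        (b : (Fin n → ℤ) × (Fin (l + 1) → ℤ)).2 jm := by
      by_contra hno
      push_neg at hno
      have hne' : ∃ j', (b : (Fin n → ℤ) × (Fin (l + 1) → ℤ)).2 j' ≠
          (a : (Fin n → ℤ) × (Fin (l + 1) → ℤ)).2 j' := ⟨j, Ne.symm hj⟩
      obtain ⟨j', hj'⟩ := hne'
      have hlt := Finset.sum_lt_sum (fun k (_ : k ∈ Finset.univ) => hno k)
        ⟨j', Finset.mem_univ j', lt_of_le_of_ne (hno j') hj'⟩
      omega
    obtain ⟨jp, hjp⟩ := hexgt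
    obtain ⟨jm, hjm⟩ := hexlt
    have hjpm : jp ≠ jm := by
      intro h
      rw [h] at hjp
      omega
    have hc₀S : (((a : (Fin n → ℤ) × (Fin (l + 1) → ℤ)).1,
        (a : (Fin n → ℤ) × (Fin (l + 1) → ℤ)).2 - Pi.single jp 1) :
        (Fin n → ℤ) × (Fin (l + 1) → ℤ)) ∈ dualMonoid (sigmaTilde δ Δ) := by
      rw [mem_S_iff]
      refine ⟨((mem_S_iff δ Δ).1 a.2).1, fun k => ?_⟩
      simp only [Pi.sub_apply]
      rcases eq_or_ne k jp with rfl | hk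
      · rw [Pi.single_eq_same]
        have hbk := coord_mem_Aset δ Δ b k
        rw [← h1] at hbk
        exact Aset_upward Δ hbk (by omega)
      · rw [Pi.single_eq_of_ne hk, sub_zero]
        exact coord_mem_Aset δ Δ a k
    set c₀ : dualMonoid (sigmaTilde δ Δ) := ⟨_, hc₀S⟩ with hc₀
    have ha : w jp + c₀ = a := by
      apply Subtype.ext
      rw [AddSubmonoid.coe_add, hw jp]
      ext x
      · simp [hc₀]
      · simp [hc₀]
    set c : dualMonoid (sigmaTilde δ Δ) := w jm + c₀ with hc
    have key : AddMonoidAlgebra.single a (1:ℂ) - AddMonoidAlgebra.single c 1 =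
        (AddMonoidAlgebra.single (w jp) 1 - AddMonoidAlgebra.single (w jm) 1) *
          AddMonoidAlgebra.single c₀ 1 := by
      rw [sub_mul, AddMonoidAlgebra.single_mul_single, AddMonoidAlgebra.single_mul_single,
        one_mul, ha, hc]
    have hmem1 : AddMonoidAlgebra.single a (1:ℂ) - AddMonoidAlgebra.single c 1 ∈
        Ideal.span (Set.range (tdef δ Δ w)) := by
      rw [key]
      exact Ideal.mul_mem_right _ _ (w_pair_diff_mem_span δ Δ w hw jp jm)
    have hccoe : (c : (Fin n → ℤ) × (Fin (l + 1) → ℤ)) =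
        ((a : (Fin n → ℤ) × (Fin (l + 1) → ℤ)).1,
         (a : (Fin n → ℤ) × (Fin (l + 1) → ℤ)).2 - Pi.single jp 1 + Pi.single jm 1) := by
      rw [hc, AddSubmonoid.coe_add, hw jm]
      ext x
      · simp [hc₀]
      · simp only [hc₀, Prod.snd_add, Pi.add_apply, Pi.sub_apply]
        ring
    have hcb1 : (c : (Fin n → ℤ) × (Fin (l + 1) → ℤ)).1 =
        (b : (Fin n → ℤ) × (Fin (l + 1) → ℤ)).1 := by
      rw [hccoe]
      exact h1
    have hcb2 : ∑ j', (c : (Fin n → ℤ) × (Fin (l + 1) → ℤ)).2 j' =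
        ∑ j', (b : (Fin n → ℤ) × (Fin (l + 1) → ℤ)).2 j' := by
      rw [hccoe]
      simp only [Pi.add_apply, Pi.sub_apply]
      rw [Finset.sum_add_distrib, Finset.sum_sub_distrib, sum_pi_single_one,
        sum_pi_single_one]
      omega
    have hjmE : jm ∈ Finset.univ.erase jp :=
      Finset.mem_erase.2 ⟨Ne.symm hjpm, Finset.mem_univ jm⟩
    have hcval : ∀ k, (c : (Fin n → ℤ) × (Fin (l + 1) → ℤ)).2 k =
        (a : (Fin n → ℤ) × (Fin (l + 1) → ℤ)).2 k - (if k = jp then 1 else 0) +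
          (if k = jm then 1 else 0) := by
      intro k
      rw [hccoe]
      simp [Pi.single_apply]
    have hmeas : ∑ j', ((c : (Fin n → ℤ) × (Fin (l + 1) → ℤ)).2 j' -
        (b : (Fin n → ℤ) × (Fin (l + 1) → ℤ)).2 j').natAbs < N := by
      rw [← hN]
      rw [← Finset.add_sum_erase _ _ (Finset.mem_univ jp), ← Finset.add_sum_erase _ _ hjmE,
        ← Finset.add_sum_erase (f := fun j' =>
          ((a : (Fin n → ℤ) × (Fin (l + 1) → ℤ)).2 j' -
            (b : (Fin n → ℤ) × (Fin (l + 1) → ℤ)).2 j').natAbs) _ (Finset.mem_univ jp),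
        ← Finset.add_sum_erase (f := fun j' =>
          ((a : (Fin n → ℤ) × (Fin (l + 1) → ℤ)).2 j' -
            (b : (Fin n → ℤ) × (Fin (l + 1) → ℤ)).2 j').natAbs) _ hjmE]
      have hrest : ∀ k ∈ (Finset.univ.erase jp).erase jm,
          ((c : (Fin n → ℤ) × (Fin (l + 1) → ℤ)).2 k -
            (b : (Fin n → ℤ) × (Fin (l + 1) → ℤ)).2 k).natAbs =
          ((a : (Fin n → ℤ) × (Fin (l + 1) → ℤ)).2 k -
            (b : (Fin n → ℤ) × (Fin (l + 1) → ℤ)).2 k).natAbs := by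
        intro k hk
        have hkjm : k ≠ jm := (Finset.mem_erase.1 hk).1
        have hkjp : k ≠ jp := (Finset.mem_erase.1 (Finset.mem_erase.1 hk).2).1
        rw [hcval k, if_neg hkjp, if_neg hkjm]
        ring_nf
      rw [Finset.sum_congr rfl hrest]
      have h1p := hcval jp
      have h1m := hcval jm
      rw [if_pos rfl, if_neg hjpm] at h1p
      rw [if_pos rfl, if_neg (Ne.symm hjpm)] at h1m
      rw [h1p, h1m]
      omega
    have hmem2 : AddMonoidAlgebra.single c (1:ℂ) - AddMonoidAlgebra.single b 1 ∈
        Ideal.span (Set.range (tdef δ Δ w)) :=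
      ih _ hmeas c b hcb1 hcb2 rfl
    have hsplit : AddMonoidAlgebra.single a (1:ℂ) - AddMonoidAlgebra.single b 1 =
        (AddMonoidAlgebra.single a 1 - AddMonoidAlgebra.single c 1) +
          (AddMonoidAlgebra.single c 1 - AddMonoidAlgebra.single b 1) := by
      ring
    rw [hsplit]
    exact add_mem hmem1 hmem2

end Part2c
section Part2d

variable {n l : ℕ} (δ : Set (Fin n → ℚ)) (Δ : Fin (l + 1) → Set (Fin n → ℚ))
  (w : Fin (l + 1) → dualMonoid (sigmaTilde δ Δ))
  (hw : ∀ i, (w i : (Fin n → ℤ) × (Fin (l + 1) → ℤ)) = ((0 : Fin n → ℤ), Pi.single i 1))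

lemma Psi_apply (f : AddMonoidAlgebra ℂ (dualMonoid (sigmaTilde δ Δ))) :
    Psi δ Δ f = AddMonoidAlgebra.mapDomain (phiAdd δ Δ) f := by
  unfold Psi
  simp [AddMonoidAlgebra.mapDomainAlgHom_apply]

lemma Psi_apply_at (f : AddMonoidAlgebra ℂ (dualMonoid (sigmaTilde δ Δ)))
    (v : dualMonoid (sigmaCayley δ (∑ i, Δ i))) :
    (Psi δ Δ f).coeff v = ∑ a ∈ f.coeff.support, if phiAdd δ Δ a = v then f.coeff a else 0 := by
  classical
  rw [Psi_apply]
  show (Finsupp.mapDomain (phiAdd δ Δ) f.coeff) v = _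
  rw [Finsupp.mapDomain, Finsupp.sum_apply]
  refine Finset.sum_congr rfl fun a _ => ?_
  simp [Finsupp.single_apply]

include hw in
lemma ker_Psi_subset (f : AddMonoidAlgebra ℂ (dualMonoid (sigmaTilde δ Δ)))
    (hker : Psi δ Δ f = 0) : f ∈ Ideal.span (Set.range (tdef δ Δ w)) := by
  classical
  have main : ∀ (N : ℕ) (f : AddMonoidAlgebra ℂ (dualMonoid (sigmaTilde δ Δ))),
      f.coeff.support.card = N → Psi δ Δ f = 0 →
      f ∈ Ideal.span (Set.range (tdef δ Δ w)) := by
    intro N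
    induction N using Nat.strong_induction_on with
    | _ N ih =>
    intro f hcard hker
    rcases Finset.eq_empty_or_nonempty f.coeff.support with hsupp | ⟨a₀, ha₀⟩
    · rw [AddMonoidAlgebra.coeff_eq_zero.1 (Finsupp.support_eq_empty.1 hsupp)]
      exact zero_mem _
    · have happ : (Psi δ Δ f).coeff (phiAdd δ Δ a₀) = 0 := by rw [hker]; rfl
      rw [Psi_apply_at] at happ
      have hex : ∃ a₁ ∈ f.coeff.support, a₁ ≠ a₀ ∧ phiAdd δ Δ a₁ = phiAdd δ Δ a₀ := by
        by_contra hno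
        push_neg at hno
        rw [Finset.sum_eq_single a₀
          (fun a ha hne => if_neg (hno a ha hne)) (fun h => absurd ha₀ h)] at happ
        rw [if_pos rfl] at happ
        exact (Finsupp.mem_support_iff.1 ha₀) happ
      obtain ⟨a₁, ha₁s, ha₁ne, hφ⟩ := hex
      have hco : ((phiAdd δ Δ a₁ : dualMonoid (sigmaCayley δ (∑ i, Δ i))) :
          (Fin n → ℤ) × (Fin 1 → ℤ)) = ((phiAdd δ Δ a₀ :
          dualMonoid (sigmaCayley δ (∑ i, Δ i))) : (Fin n → ℤ) × (Fin 1 → ℤ)) := by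
        rw [hφ]
      have h1 : (a₁ : (Fin n → ℤ) × (Fin (l + 1) → ℤ)).1 =
          (a₀ : (Fin n → ℤ) × (Fin (l + 1) → ℤ)).1 :=
        congrArg (fun q : (Fin n → ℤ) × (Fin 1 → ℤ) => q.1) hco
      have h2 : ∑ j, (a₁ : (Fin n → ℤ) × (Fin (l + 1) → ℤ)).2 j =
          ∑ j, (a₀ : (Fin n → ℤ) × (Fin (l + 1) → ℤ)).2 j := by
        have := congrArg (fun q : (Fin n → ℤ) × (Fin 1 → ℤ) => q.2 0) hco
        exact this
      set D : AddMonoidAlgebra ℂ (dualMonoid (sigmaTilde δ Δ)) :=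
        AddMonoidAlgebra.single a₀ 1 - AddMonoidAlgebra.single a₁ 1 with hD
      have hDmem : D ∈ Ideal.span (Set.range (tdef δ Δ w)) :=
        diff_mem_span δ Δ w hw _ a₀ a₁ h1.symm h2.symm rfl
      have hPsiD : Psi δ Δ D = 0 := by
        rw [hD, map_sub, Psi_single, Psi_single, hφ, sub_self]
      set f' : AddMonoidAlgebra ℂ (dualMonoid (sigmaTilde δ Δ)) := f - f.coeff a₀ • D with hf'
      have hker' : Psi δ Δ f' = 0 := by
        rw [hf', map_sub, map_smul, hPsiD, smul_zero, sub_zero, hker]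
      have hDval : ∀ x, D.coeff x = (if a₀ = x then (1:ℂ) else 0) - (if a₁ = x then 1 else 0) := by
        intro x
        rw [hD, AddMonoidAlgebra.coeff_sub, Finsupp.sub_apply, AddMonoidAlgebra.coeff_single,
          AddMonoidAlgebra.coeff_single, Finsupp.single_apply, Finsupp.single_apply]
      have hsupp' : f'.coeff.support ⊆ f.coeff.support.erase a₀ := by
        intro x hx
        have hfx : f'.coeff x ≠ 0 := Finsupp.mem_support_iff.1 hx
        have hxne : x ≠ a₀ := by
          intro hxa
          apply hfx
          rw [hf', AddMonoidAlgebra.coeff_sub, Finsupp.sub_apply, AddMonoidAlgebra.coeff_smul,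
            Finsupp.smul_apply, hDval, hxa,
            if_pos rfl, if_neg ha₁ne]
          simp
        rw [Finset.mem_erase]
        refine ⟨hxne, ?_⟩
        by_contra hxs
        apply hfx
        rw [hf', AddMonoidAlgebra.coeff_sub, Finsupp.sub_apply, AddMonoidAlgebra.coeff_smul,
          Finsupp.smul_apply, hDval,
          if_neg (fun h => hxne h.symm), if_neg (fun h : a₁ = x => hxs (h ▸ ha₁s)),
          Finsupp.notMem_support_iff.1 hxs]
        simp
      have hcard' : f'.coeff.support.card < N := by
        have h3 := Finset.card_le_card hsupp'
        rw [Finset.card_erase_of_mem ha₀] at h3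
        have h4 : 0 < f.coeff.support.card := Finset.card_pos.2 ⟨a₀, ha₀⟩
        omega
      have hf'mem : f' ∈ Ideal.span (Set.range (tdef δ Δ w)) :=
        ih _ hcard' f' rfl hker'
      have hsplit : f = f' + f.coeff a₀ • D := by
        rw [hf']
        ring
      rw [hsplit]
      refine add_mem hf'mem ?_
      rw [Algebra.smul_def]
      exact Ideal.mul_mem_left _ _ hDmem
  exact main f.coeff.support.card f rfl hker

include hw in
lemma span_eq_ker :
    Ideal.span (Set.range (tdef δ Δ w)) = RingHom.ker (Psi δ Δ) := by
  apply le_antisymm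
  · rw [Ideal.span_le]
    rintro x ⟨i, rfl⟩
    exact Psi_tdef δ Δ w hw i
  · intro f hf
    exact ker_Psi_subset δ Δ w hw f hf

include hw in
theorem part2_equiv
    (hadm : ∀ u, (∀ x ∈ δ, 0 ≤ ∑ i, u i * x i) →
      ∀ i₁ i₂ : Fin (l + 1),
        (¬ ∃ x ∈ faceOf (Δ i₁) u, IsLatticePoint x) →
        (¬ ∃ x ∈ faceOf (Δ i₂) u, IsLatticePoint x) → i₁ = i₂) :
    Nonempty ((AddMonoidAlgebra ℂ (dualMonoid (sigmaTilde δ Δ)) ⧸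
        Ideal.span (Set.range (tdef δ Δ w))) ≃ₐ[ℂ]
      AddMonoidAlgebra ℂ (dualMonoid (sigmaCayley δ (∑ i, Δ i)))) :=
  ⟨(Ideal.quotientEquivAlgOfEq ℂ (span_eq_ker δ Δ w hw)).trans
    (Ideal.quotientKerAlgEquivOfSurjective (Psi_surjective δ Δ hadm))⟩

end Part2d
/-- algebraic content of Theorem 14.1(1) of the paper.
Given an admissible Minkowski decomposition `Δ = Δ₀ + ⋯ + Δ_l` of rational
polyhedra with common recession cone `δ`, let `σ̃` be the cone generated by
`δ × {0}` and the `Δᵢ × {eᵢ}`, let `R = ℂ[σ̃^∨ ∩ (ℤⁿ ⊕ ℤ^{l+1})]`, and set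
`tᵢ = χ^{(0,eᵢ)} − χ^{(0,e₀)}`.  Then (1) `R` is flat over `ℂ[x₁, …, x_l]` via
`xᵢ ↦ tᵢ`, and (2) `R/(t₁, …, t_l) ≅ ℂ[σ^∨ ∩ (ℤⁿ ⊕ ℤ)]` where `σ` is the cone
generated by `δ × {0}` and `Δ × {1}`. -/
theorem toric_deformation_flat_and_special_fiber
    {n l : ℕ} (δ : Set (Fin n → ℚ)) (hδ : IsRatPolyhedralCone δ)
    (Δ : Fin (l + 1) → Set (Fin n → ℚ))
    (hpoly : ∀ i, IsRatPolyhedron (Δ i))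
    (hrec : ∀ i, recessionCone (Δ i) = δ)
    (hadm : ∀ u, (∀ x ∈ δ, 0 ≤ ∑ i, u i * x i) →
      ∀ i₁ i₂ : Fin (l + 1),
        (¬ ∃ x ∈ faceOf (Δ i₁) u, IsLatticePoint x) →
        (¬ ∃ x ∈ faceOf (Δ i₂) u, IsLatticePoint x) → i₁ = i₂)
    (w : Fin (l + 1) → dualMonoid (sigmaTilde δ Δ))
    (hw : ∀ i, (w i : (Fin n → ℤ) × (Fin (l + 1) → ℤ))
      = ((0 : Fin n → ℤ), Pi.single i 1)) :
    letI R := AddMonoidAlgebra ℂ (dualMonoid (sigmaTilde δ Δ))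
    letI t : Fin l → R := fun i =>
      AddMonoidAlgebra.single (w i.succ) 1 - AddMonoidAlgebra.single (w 0) 1
    letI : Algebra (MvPolynomial (Fin l) ℂ) R := ((MvPolynomial.aeval t).toRingHom).toAlgebra
    Module.Flat (MvPolynomial (Fin l) ℂ) R ∧
      Nonempty ((R ⧸ Ideal.span (Set.range t)) ≃ₐ[ℂ]
        AddMonoidAlgebra ℂ (dualMonoid (sigmaCayley δ (∑ i, Δ i)))) := by
  have hne : ∀ i, (Δ i).Nonempty := fun i => (hpoly i).1
  exact ⟨part1_flat δ Δ hne w hw, part2_equiv δ Δ w hw hadm⟩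
end
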